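/- For every extensional digraph G, the structure 𝕍_ω(G) = (M_ω, E_ω), regarded as an {∈}-structure with ∈ interpreted by E_ω, satisfies the theory Z − Infinity: the axioms of Extensionality, Pairing, Union, Power Set, and every instance of the Comprehension schema. -/
import Mathlib


/-- An extensional digraph: a set `M` (of ZF-sets) together with a binary relation
`E` on `M` such that any two elements of `M` with the same `E`-predecessors are
equal. -/
structure ExtDigraph where
  /-- The carrier set. -/
  M : ZFSet
  /-- The edge relation. -/
  E : ZFSet → ZFSet → Prop
  dom_left : ∀ x y, E x y → x ∈ M
  dom_right : ∀ x y, E x y → y ∈ M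
  ext : ∀ x y, x ∈ M → y ∈ M → (∀ z, E z x ↔ E z y) → x = y

namespace ExtDigraph

/-- The von Neumann natural number `n` as a ZF-set, used as a tag. -/
def tag : ℕ → ZFSet
  | 0 => ∅
  | n + 1 => insert (tag n) (tag n)

/-- The deficiency of a digraph `(M, E)`: the collection of subsets of `M` which are
not the `E`-predecessor set of any element of `M`. -/
def defic (M : ZFSet) (E : ZFSet → ZFSet → Prop) : ZFSet :=
  (ZFSet.powerset M).sep fun X => ¬ ∃ y, y ∈ M ∧ ∀ z, z ∈ M → (z ∈ X ↔ E z y)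

/-- The digraphs `𝕍_n(G) = (M_n, E_n)`, defined recursively:
`M_0 = {0} × M` with `(0,x) E_0 (0,y)` iff `x E y`; and
`M_{n+1} = M_n ∪ ({n+1} × D(𝕍_n))` where `E_{n+1}` adds the pairs
`(z, (n+1, X))` for `z ∈ X ∈ D(𝕍_n)`. -/
def lvl (G : ExtDigraph) : ℕ → ZFSet × (ZFSet → ZFSet → Prop)
  | 0 =>
    (ZFSet.prod {tag 0} G.M,
      fun a b => ∃ x y, G.E x y ∧ a = ZFSet.pair (tag 0) x ∧ b = ZFSet.pair (tag 0) y)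
  | n + 1 =>
    let p := lvl G n
    (p.1 ∪ ZFSet.prod {tag (n + 1)} (defic p.1 p.2),
      fun a b => p.2 a b ∨
        ∃ X, X ∈ defic p.1 p.2 ∧ b = ZFSet.pair (tag (n + 1)) X ∧ a ∈ X)

/-- The carrier `M_n(G)` of `𝕍_n(G)`. -/
def Mlvl (G : ExtDigraph) (n : ℕ) : ZFSet := (lvl G n).1

/-- The edge relation `E_n(G)` of `𝕍_n(G)`. -/
def Elvl (G : ExtDigraph) (n : ℕ) : ZFSet → ZFSet → Prop := (lvl G n).2

/-- Membership in `M_ω(G) = ⋃_{n<ω} M_n(G)`. -/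
def MemMomega (G : ExtDigraph) (x : ZFSet) : Prop := ∃ n, x ∈ Mlvl G n

/-- The edge relation `E_ω(G) = ⋃_{n<ω} E_n(G)` of `𝕍_ω(G)`. -/
def Eomega (G : ExtDigraph) (a b : ZFSet) : Prop := ∃ n, Elvl G n a b

/-- The carrier of `𝕍_m(G)` for `m ≤ ω` (with `⊤` standing for `ω`), as a class. -/
def MlvlI (G : ExtDigraph) : ℕ∞ → Set ZFSet :=
  WithTop.recTopCoe {x | MemMomega G x} fun n => {x | x ∈ Mlvl G n}

/-- The edge relation of `𝕍_m(G)` for `m ≤ ω` (with `⊤` standing for `ω`). -/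
def ElvlI (G : ExtDigraph) : ℕ∞ → ZFSet → ZFSet → Prop :=
  WithTop.recTopCoe (Eomega G) fun n => Elvl G n

end ExtDigraph

namespace ExtDigraph

variable (G : ExtDigraph)

theorem tag_mem_tag : ∀ {k n : ℕ}, k < n → tag k ∈ tag n := by
  intro k n h
  induction n with
  | zero => omega
  | succ n ih =>
    rw [tag, ZFSet.mem_insert_iff]
    rcases Nat.lt_succ_iff_lt_or_eq.1 h with h | h
    · exact Or.inr (ih h)
    · exact Or.inl (by rw [h])

theorem tag_injective : Function.Injective tag := by
  intro k n h
  by_contra hne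
  rcases Nat.lt_or_ge k n with hl | hl
  · exact ZFSet.mem_irrefl _ (h ▸ tag_mem_tag hl)
  · exact ZFSet.mem_irrefl _ (h ▸ tag_mem_tag (lt_of_le_of_ne hl (Ne.symm hne)))

theorem Mlvl_zero : Mlvl G 0 = ZFSet.prod {tag 0} G.M := rfl

theorem Mlvl_succ (n : ℕ) :
    Mlvl G (n + 1) = Mlvl G n ∪ ZFSet.prod {tag (n + 1)} (defic (Mlvl G n) (Elvl G n)) := rfl

theorem Elvl_zero (a b : ZFSet) :
    Elvl G 0 a b ↔ ∃ x y, G.E x y ∧ a = ZFSet.pair (tag 0) x ∧ b = ZFSet.pair (tag 0) y :=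
  Iff.rfl

theorem Elvl_succ (n : ℕ) (a b : ZFSet) :
    Elvl G (n + 1) a b ↔ Elvl G n a b ∨
      ∃ X, X ∈ defic (Mlvl G n) (Elvl G n) ∧ b = ZFSet.pair (tag (n + 1)) X ∧ a ∈ X :=
  Iff.rfl

theorem Elvl_dom : ∀ n a b, Elvl G n a b → a ∈ Mlvl G n ∧ b ∈ Mlvl G n := by
  intro n
  induction n with
  | zero =>
    rintro a b ⟨x, y, hE, rfl, rfl⟩
    constructor <;>
      · rw [Mlvl_zero, ZFSet.pair_mem_prod]
        exact ⟨ZFSet.mem_singleton.2 rfl, by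
          first
            | exact G.dom_left _ _ hE
            | exact G.dom_right _ _ hE⟩
  | succ n ih =>
    rintro a b (h | ⟨X, hX, rfl, haX⟩)
    · exact ⟨ZFSet.mem_union.2 (Or.inl (ih a b h).1), ZFSet.mem_union.2 (Or.inl (ih a b h).2)⟩
    · have hXsub : X ∈ ZFSet.powerset (Mlvl G n) := (ZFSet.mem_sep.1 hX).1
      refine ⟨ZFSet.mem_union.2 (Or.inl (ZFSet.mem_powerset.1 hXsub haX)),
        ZFSet.mem_union.2 (Or.inr ?_)⟩
      exact ZFSet.pair_mem_prod.2 ⟨ZFSet.mem_singleton.2 rfl, hX⟩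

theorem Mlvl_shape : ∀ n b, b ∈ Mlvl G n → ∃ k ≤ n, ∃ c, b = ZFSet.pair (tag k) c := by
  intro n
  induction n with
  | zero =>
    intro b hb
    rw [Mlvl_zero, ZFSet.mem_prod] at hb
    rcases hb with ⟨u, hu, v, _, rfl⟩
    exact ⟨0, le_refl _, v, by rw [ZFSet.mem_singleton.1 hu]⟩
  | succ n ih =>
    intro b hb
    rcases ZFSet.mem_union.1 hb with hb | hb
    · rcases ih b hb with ⟨k, hk, c, hc⟩
      exact ⟨k, Nat.le_succ_of_le hk, c, hc⟩
    · rw [ZFSet.mem_prod] at hb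
      rcases hb with ⟨u, hu, v, _, rfl⟩
      exact ⟨n + 1, le_refl _, v, by rw [ZFSet.mem_singleton.1 hu]⟩

theorem new_not_mem (n : ℕ) (X : ZFSet) : ZFSet.pair (tag (n + 1)) X ∉ Mlvl G n := by
  intro h
  rcases Mlvl_shape G n _ h with ⟨k, hk, c, hc⟩
  have := (ZFSet.pair_injective (hc.symm)).1
  have := tag_injective this
  omega

theorem Mlvl_mono_succ (n : ℕ) : Mlvl G n ⊆ Mlvl G (n + 1) := by
  intro z hz
  exact ZFSet.mem_union.2 (Or.inl hz)

theorem Mlvl_mono {n m : ℕ} (h : n ≤ m) : Mlvl G n ⊆ Mlvl G m := by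
  induction h with
  | refl => exact fun _ h => h
  | step h ih => exact fun z hz => Mlvl_mono_succ G _ (ih hz)

theorem Elvl_mono {n m : ℕ} (h : n ≤ m) {a b : ZFSet} (hab : Elvl G n a b) :
    Elvl G m a b := by
  induction h with
  | refl => exact hab
  | step h ih => exact Or.inl ih

theorem Elvl_stab {n m : ℕ} (h : n ≤ m) {a b : ZFSet} (hb : b ∈ Mlvl G n) :
    Elvl G m a b ↔ Elvl G n a b := by
  induction h with
  | refl => exact Iff.rfl
  | @step m h ih =>
    constructor
    · rintro (he | ⟨X, hX, rfl, haX⟩)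
      · exact ih.1 he
      · exact absurd (Mlvl_mono G h hb) (new_not_mem G m X)
    · exact fun he => Or.inl (ih.2 he)

theorem Eomega_iff {n : ℕ} {a b : ZFSet} (hb : b ∈ Mlvl G n) :
    Eomega G a b ↔ Elvl G n a b := by
  constructor
  · rintro ⟨m, hm⟩
    rcases Nat.le_total n m with h | h
    · exact (Elvl_stab G h hb).1 hm
    · exact (Elvl_stab G (le_refl n) hb).1 (Elvl_mono G h hm)
  · exact fun h => ⟨n, h⟩

theorem Eomega_dom {a b : ZFSet} (h : Eomega G a b) : MemMomega G a ∧ MemMomega G b := by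
  rcases h with ⟨n, hn⟩
  exact ⟨⟨n, (Elvl_dom G n a b hn).1⟩, ⟨n, (Elvl_dom G n a b hn).2⟩⟩

theorem Elvl_ext : ∀ n a b, a ∈ Mlvl G n → b ∈ Mlvl G n →
    (∀ z, Elvl G n z a ↔ Elvl G n z b) → a = b := by
  intro n
  induction n with
  | zero =>
    intro a b ha hb hz
    rw [Mlvl_zero, ZFSet.mem_prod] at ha hb
    rcases ha with ⟨u, hu, x, hxM, rfl⟩
    rcases hb with ⟨v, hv, y, hyM, rfl⟩
    rw [ZFSet.mem_singleton.1 hu] at *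
    rw [ZFSet.mem_singleton.1 hv] at *
    have : x = y := by
      apply G.ext x y hxM hyM
      intro w
      constructor
      · intro hw
        obtain ⟨w', y', hE, hw', hy'⟩ := (hz (ZFSet.pair (tag 0) w)).1 ⟨w, x, hw, rfl, rfl⟩
        obtain ⟨-, rfl⟩ := ZFSet.pair_injective hw'
        obtain ⟨-, rfl⟩ := ZFSet.pair_injective hy'
        exact hE
      · intro hw
        obtain ⟨w', x', hE, hw', hx'⟩ := (hz (ZFSet.pair (tag 0) w)).2 ⟨w, y, hw, rfl, rfl⟩
        obtain ⟨-, rfl⟩ := ZFSet.pair_injective hw'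
        obtain ⟨-, rfl⟩ := ZFSet.pair_injective hx'
        exact hE
    rw [this]
  | succ n ih =>
    intro a b ha hb hz
    have preds_new : ∀ X ∈ defic (Mlvl G n) (Elvl G n), ∀ z,
        Elvl G (n + 1) z (ZFSet.pair (tag (n + 1)) X) ↔ z ∈ X := by
      intro X hX z
      constructor
      · rintro (he | ⟨Y, hY, hbY, hzY⟩)
        · exact absurd (Elvl_dom G n _ _ he).2 (new_not_mem G n X)
        · rwa [(ZFSet.pair_injective hbY).2]
      · exact fun hzX => Or.inr ⟨X, hX, rfl, hzX⟩
    have old_imp : ∀ c ∈ Mlvl G n, ∀ z, Elvl G (n + 1) z c → Elvl G n z c := by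
      rintro c hc z (he | ⟨Y, hY, rfl, _⟩)
      · exact he
      · exact absurd hc (new_not_mem G n Y)
    rcases ZFSet.mem_union.1 ha with ha' | ha' <;> rcases ZFSet.mem_union.1 hb with hb' | hb'
    · -- both old
      apply ih a b ha' hb'
      intro z
      constructor
      · exact fun h => old_imp b hb' z ((hz z).1 (Or.inl h))
      · exact fun h => old_imp a ha' z ((hz z).2 (Or.inl h))
    · -- a old, b new
      exfalso
      rw [ZFSet.mem_prod] at hb'
      rcases hb' with ⟨u, hu, X, hX, rfl⟩
      rw [ZFSet.mem_singleton.1 hu] at *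
      have hXd := (ZFSet.mem_sep.1 hX).2
      apply hXd
      refine ⟨a, ha', fun z _ => ?_⟩
      rw [← preds_new X hX z, ← hz z]
      constructor
      · exact fun h => old_imp a ha' z h
      · exact fun h => Or.inl h
    · -- a new, b old
      exfalso
      rw [ZFSet.mem_prod] at ha'
      rcases ha' with ⟨u, hu, X, hX, rfl⟩
      rw [ZFSet.mem_singleton.1 hu] at *
      have hXd := (ZFSet.mem_sep.1 hX).2
      apply hXd
      refine ⟨b, hb', fun z _ => ?_⟩
      rw [← preds_new X hX z, hz z]
      constructor
      · exact fun h => old_imp b hb' z h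
      · exact fun h => Or.inl h
    · -- both new
      rw [ZFSet.mem_prod] at ha' hb'
      rcases ha' with ⟨u, hu, X, hX, rfl⟩
      rcases hb' with ⟨v, hv, Y, hY, rfl⟩
      rw [ZFSet.mem_singleton.1 hu] at *
      rw [ZFSet.mem_singleton.1 hv] at *
      have : X = Y := by
        apply ZFSet.ext
        intro z
        rw [← preds_new X hX z, ← preds_new Y hY z]
        exact hz z
      rw [this]

theorem Eomega_ext {a b : ZFSet} (ha : MemMomega G a) (hb : MemMomega G b)
    (h : ∀ z, Eomega G z a ↔ Eomega G z b) : a = b := by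
  rcases ha with ⟨n, hn⟩
  rcases hb with ⟨m, hm⟩
  have han : a ∈ Mlvl G (max n m) := Mlvl_mono G (le_max_left n m) hn
  have hbm : b ∈ Mlvl G (max n m) := Mlvl_mono G (le_max_right n m) hm
  apply Elvl_ext G (max n m) a b han hbm
  intro z
  rw [← Eomega_iff G han, ← Eomega_iff G hbm]
  exact h z

/-- Every subset of a level is realized as an exact predecessor set in `M_ω`. -/
theorem realize_subset (n : ℕ) (X : ZFSet) (hX : X ⊆ Mlvl G n) :
    ∃ y, MemMomega G y ∧ ∀ z, Eomega G z y ↔ z ∈ X := by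
  by_cases hd : X ∈ defic (Mlvl G n) (Elvl G n)
  · refine ⟨ZFSet.pair (tag (n + 1)) X, ⟨n + 1, ZFSet.mem_union.2 (Or.inr
      (ZFSet.pair_mem_prod.2 ⟨ZFSet.mem_singleton.2 rfl, hd⟩))⟩, fun z => ?_⟩
    have hmem : ZFSet.pair (tag (n + 1)) X ∈ Mlvl G (n + 1) :=
      ZFSet.mem_union.2 (Or.inr (ZFSet.pair_mem_prod.2 ⟨ZFSet.mem_singleton.2 rfl, hd⟩))
    rw [Eomega_iff G hmem]
    constructor
    · rintro (he | ⟨Y, hY, hbY, hzY⟩)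
      · exact absurd (Elvl_dom G n _ _ he).2 (new_not_mem G n X)
      · rwa [(ZFSet.pair_injective hbY).2]
    · exact fun hzX => Or.inr ⟨X, hd, rfl, hzX⟩
  · rw [defic, ZFSet.mem_sep, not_and, not_not] at hd
    rcases hd (ZFSet.mem_powerset.2 hX) with ⟨y, hyM, hy⟩
    refine ⟨y, ⟨n, hyM⟩, fun z => ?_⟩
    rw [Eomega_iff G hyM]
    constructor
    · intro he
      exact (hy z (Elvl_dom G n z y he).1).2 he
    · intro hzX
      exact (hy z (hX hzX)).1 hzX

end ExtDigraph

open FirstOrder FirstOrder.Language ExtDigraph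

/-- The relation symbols for the language `{∈}`: a single binary relation. -/
inductive memRel : ℕ → Type
  | mem : memRel 2

/-- The first-order language with a single binary relation symbol `∈`. -/
def Lmem : FirstOrder.Language := ⟨fun _ => Empty, memRel⟩

/-- A binary relation on `M` interprets the language `{∈}`. -/
def memStructure {M : Type*} (mem : M → M → Prop) : Lmem.Structure M where
  funMap := fun f _ => f.elim
  RelMap | .mem => fun x => mem (x 0) (x 1)

section Axioms

variable (M : Type*) (mem : M → M → Prop)

/-- Extensionality. -/
def AxExt : Prop := ∀ x y : M, (∀ z, mem z x ↔ mem z y) → x = y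

/-- Pairing. -/
def AxPairing : Prop := ∀ a b : M, ∃ p : M, ∀ z, mem z p ↔ (z = a ∨ z = b)

/-- Union. -/
def AxUnion : Prop := ∀ x : M, ∃ u : M, ∀ z, mem z u ↔ ∃ w, mem z w ∧ mem w x

/-- Power Set. -/
def AxPower : Prop := ∀ x : M, ∃ P : M, ∀ z, mem z P ↔ ∀ w, mem w z → mem w x

/-- The Comprehension schema for the language `{∈}`: for every first-order formula
`φ(z, p̄)` of `{∈}`, every set `x` and parameters `p̄`, the set `{z ∈ x : φ(z, p̄)}` exists. -/
def AxComp : Prop :=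
  ∀ (n : ℕ) (φ : Lmem.Formula (Fin (n + 1))) (x : M) (p : Fin n → M),
    ∃ s : M, ∀ z, mem z s ↔
      (mem z x ∧ (letI := memStructure mem; φ.Realize (Fin.cons z p)))

/-- The theory Z − Infinity: Extensionality, Pairing, Union, Power Set, and
every instance of the Comprehension schema. -/
def ZminusInfinity : Prop :=
  AxExt M mem ∧ AxPairing M mem ∧ AxUnion M mem ∧ AxPower M mem ∧ AxComp M mem

end Axioms

/-- **`𝕍_ω(G) ⊨ Z − Infinity`.** For every extensional digraph `G`, the structure
`𝕍_ω(G) = (M_ω, E_ω)`, regarded as an `{∈}`-structure with `∈` interpreted by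
`E_ω`, satisfies Extensionality, Pairing, Union, Power Set, and every instance of
the Comprehension schema. -/
theorem Vomega_models_Z_minus_Infinity (G : ExtDigraph) :
    ZminusInfinity {x : ZFSet // MemMomega G x}
      (fun a b => Eomega G a.1 b.1) := by
  have ext : AxExt {x : ZFSet // MemMomega G x} (fun a b => Eomega G a.1 b.1) := by
    intro a b h
    apply Subtype.ext
    apply Eomega_ext G a.2 b.2
    intro z
    constructor
    · intro hz
      exact (h ⟨z, (Eomega_dom G hz).1⟩).1 hz
    · intro hz
      exact (h ⟨z, (Eomega_dom G hz).1⟩).2 hz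
  refine ⟨ext, ?_, ?_, ?_, ?_⟩
  · -- Pairing
    rintro ⟨a, na, ha⟩ ⟨b, nb, hb⟩
    set n := max na nb with hn
    have haM : a ∈ Mlvl G n := Mlvl_mono G (le_max_left na nb) ha
    have hbM : b ∈ Mlvl G n := Mlvl_mono G (le_max_right na nb) hb
    have hsub : ({a, b} : ZFSet) ⊆ Mlvl G n := by
      intro z hz
      rcases ZFSet.mem_insert_iff.1 hz with rfl | hz
      · exact haM
      · rw [ZFSet.mem_singleton.1 hz]; exact hbM
    rcases realize_subset G n _ hsub with ⟨y, hy, hyP⟩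
    refine ⟨⟨y, hy⟩, fun z => ?_⟩
    beta_reduce
    rw [hyP z.1]
    simp only [ZFSet.mem_insert_iff, ZFSet.mem_singleton]
    constructor
    · rintro (h | h)
      · exact Or.inl (Subtype.ext h)
      · exact Or.inr (Subtype.ext h)
    · rintro (rfl | rfl) <;> simp
  · -- Union
    rintro ⟨x, nx, hx⟩
    set U : ZFSet := (Mlvl G nx).sep
      (fun z => ∃ w, Eomega G z w ∧ Eomega G w x) with hU
    have hsub : U ⊆ Mlvl G nx := fun z hz => (ZFSet.mem_sep.1 hz).1
    rcases realize_subset G nx U hsub with ⟨u, hu, huP⟩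
    refine ⟨⟨u, hu⟩, fun z => ?_⟩
    beta_reduce
    rw [huP z.1, hU, ZFSet.mem_sep]
    constructor
    · rintro ⟨_, w, hzw, hwx⟩
      exact ⟨⟨w, (Eomega_dom G hzw).2⟩, hzw, hwx⟩
    · rintro ⟨w, hzw, hwx⟩
      refine ⟨?_, w.1, hzw, hwx⟩
      have hwn : w.1 ∈ Mlvl G nx := by
        have := (Eomega_iff G hx).1 hwx
        exact (Elvl_dom G nx _ _ this).1
      have := (Eomega_iff G hwn).1 hzw
      exact (Elvl_dom G nx _ _ this).1
  · -- Power set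
    rintro ⟨x, nx, hx⟩
    set P : ZFSet := (Mlvl G (nx + 1)).sep
      (fun z => ∀ w, Eomega G w z → Eomega G w x) with hP
    have hsub : P ⊆ Mlvl G (nx + 1) := fun z hz => (ZFSet.mem_sep.1 hz).1
    rcases realize_subset G (nx + 1) P hsub with ⟨p, hp, hpP⟩
    refine ⟨⟨p, hp⟩, fun z => ?_⟩
    beta_reduce
    rw [hpP z.1, hP, ZFSet.mem_sep]
    constructor
    · rintro ⟨_, hsubs⟩ w hwz
      exact hsubs w.1 hwz
    · intro hsubs
      have hzsub : ∀ w, Eomega G w z.1 → Eomega G w x := by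
        intro w hw
        exact hsubs ⟨w, (Eomega_dom G hw).1⟩ hw
      refine ⟨?_, hzsub⟩
      -- z has predecessors contained in predecessors of x, hence equals
      -- a realizer of a subset of Mlvl nx, which lives in Mlvl (nx+1)
      set B : ZFSet := (Mlvl G nx).sep (fun w => Eomega G w z.1) with hB
      have hBsub : B ⊆ Mlvl G nx := fun w hw => (ZFSet.mem_sep.1 hw).1
      have hy : ∃ y, y ∈ Mlvl G (nx + 1) ∧ ∀ w, Eomega G w y ↔ w ∈ B := by
        by_cases hd : B ∈ defic (Mlvl G nx) (Elvl G nx)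
        · have hmem : ZFSet.pair (tag (nx + 1)) B ∈ Mlvl G (nx + 1) :=
            ZFSet.mem_union.2 (Or.inr (ZFSet.pair_mem_prod.2 ⟨ZFSet.mem_singleton.2 rfl, hd⟩))
          refine ⟨_, hmem, fun w => ?_⟩
          rw [Eomega_iff G hmem]
          constructor
          · rintro (he | ⟨Y, hY, hbY, hzY⟩)
            · exact absurd (Elvl_dom G nx _ _ he).2 (new_not_mem G nx B)
            · rwa [(ZFSet.pair_injective hbY).2]
          · exact fun hzX => Or.inr ⟨B, hd, rfl, hzX⟩
        · rw [defic, ZFSet.mem_sep, not_and, not_not] at hd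
          rcases hd (ZFSet.mem_powerset.2 hBsub) with ⟨y, hyM, hyP⟩
          refine ⟨y, Mlvl_mono_succ G nx hyM, fun w => ?_⟩
          rw [Eomega_iff G hyM]
          constructor
          · exact fun he => (hyP w (Elvl_dom G nx _ _ he).1).2 he
          · exact fun hwB => (hyP w (hBsub hwB)).1 hwB
      rcases hy with ⟨y, hyM, hyP⟩
      have : z.1 = y := by
        apply Eomega_ext G z.2 ⟨nx + 1, hyM⟩
        intro w
        rw [hyP w, hB, ZFSet.mem_sep]
        constructor
        · intro hw
          refine ⟨?_, hw⟩
          have := (Eomega_iff G hx).1 (hzsub w hw)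
          exact (Elvl_dom G nx _ _ this).1
        · exact fun h => h.2
      rw [this]; exact hyM
  · -- Comprehension
    rintro n φ ⟨x, nx, hx⟩ p
    set S : ZFSet := (Mlvl G nx).sep
      (fun z => Eomega G z x ∧ ∃ h : MemMomega G z,
        (letI := memStructure (fun a b : {x : ZFSet // MemMomega G x} => Eomega G a.1 b.1);
          φ.Realize (Fin.cons ⟨z, h⟩ p))) with hS
    have hsub : S ⊆ Mlvl G nx := fun z hz => (ZFSet.mem_sep.1 hz).1
    rcases realize_subset G nx S hsub with ⟨s, hs, hsP⟩
    refine ⟨⟨s, hs⟩, fun z => ?_⟩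
    beta_reduce
    rw [hsP z.1, hS, ZFSet.mem_sep]
    constructor
    · rintro ⟨_, hzx, h, hφ⟩
      exact ⟨hzx, hφ⟩
    · rintro ⟨hzx, hφ⟩
      have hzM : z.1 ∈ Mlvl G nx := by
        have := (Eomega_iff G hx).1 hzx
        exact (Elvl_dom G nx _ _ this).1
      exact ⟨hzM, hzx, z.2, hφ⟩
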